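/- Left straightenings are unique up to post-composition with an automorphism: if {γ_n} and {δ_n} are sequences of automorphisms of the unit disk D with γ_n^{-1} ∘ f^n → h and δ_n^{-1} ∘ f^n → k locally uniformly, for holomorphic h, k : D → D, then there exists an automorphism φ of D with h = φ ∘ k. -/

import Mathlib

open Complex Metric Filter Set

/-- Inverse hyperbolic tangent. -/
noncomputable def artanh (t : ℝ) : ℝ := (1/2) * Real.log ((1 + t) / (1 - t))

/-- Poincaré distance on the unit disk. -/
noncomputable def pd (z w : ℂ) : ℝ :=
  artanh ‖(w - z) / (1 - (starRingEnd ℂ) z * w)‖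

/-- Holomorphic self-map of the unit disk. -/
def HolSelfDisk (f : ℂ → ℂ) : Prop :=
  DifferentiableOn ℂ f (ball (0:ℂ) 1) ∧ MapsTo f (ball (0:ℂ) 1) (ball (0:ℂ) 1)

/-- A pair of maps that are mutually inverse holomorphic self-maps of the disk,
i.e. an automorphism of the disk together with its inverse. -/
def IsDiskAutPair (γ γinv : ℂ → ℂ) : Prop :=
  HolSelfDisk γ ∧ HolSelfDisk γinv ∧
  (∀ z ∈ ball (0:ℂ) 1, γinv (γ z) = z) ∧ (∀ z ∈ ball (0:ℂ) 1, γ (γinv z) = z)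

/-!
Each `γₙ⁻¹` is an isometry of the pseudo-hyperbolic distance `‖(z - w) / (1 - w̄ z)‖`, so
`γₙ⁻¹ ∘ fⁿ` and `δₙ⁻¹ ∘ fⁿ` separate every pair of points exactly as `fⁿ` does; in the limit,
`h` and `k` separate every pair of points equally. Moving `h 0` and `k 0` to the origin by
Blaschke factors, the resulting maps have equal moduli on the disk, hence differ by a rotation.
-/

open Topology ComplexConjugate

noncomputable def blaschkeFactor (a z : ℂ) : ℂ := (z - a) / (1 - conj a * z)

lemma normSq_one_sub_conj_mul_sub_normSq_sub (a z : ℂ) :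
    normSq (1 - conj a * z) - normSq (z - a) = (1 - normSq a) * (1 - normSq z) := by
  simp only [normSq_apply, sub_re, sub_im, mul_re, mul_im, one_re, one_im, conj_re, conj_im]
  ring

lemma one_sub_conj_mul_ne_zero {a z : ℂ} (ha : ‖a‖ < 1) (hz : ‖z‖ < 1) :
    1 - conj a * z ≠ 0 := by
  intro H
  have : ‖conj a * z‖ = 1 := by rw [← sub_eq_zero.1 H, norm_one]
  rw [norm_mul, norm_conj] at this
  nlinarith [norm_nonneg a, norm_nonneg z]

lemma norm_blaschkeFactor_lt_one {a z : ℂ} (ha : ‖a‖ < 1) (hz : ‖z‖ < 1) :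
    ‖blaschkeFactor a z‖ < 1 := by
  rw [blaschkeFactor, norm_div, div_lt_one (norm_pos_iff.2 (one_sub_conj_mul_ne_zero ha hz)),
    norm_def, norm_def]
  apply Real.sqrt_lt_sqrt (normSq_nonneg _)
  have ha' : normSq a < 1 := by rw [normSq_eq_norm_sq]; nlinarith [norm_nonneg a]
  have hz' : normSq z < 1 := by rw [normSq_eq_norm_sq]; nlinarith [norm_nonneg z]
  nlinarith [normSq_one_sub_conj_mul_sub_normSq_sub a z]

lemma blaschkeFactor_neg_blaschkeFactor {a z : ℂ} (ha : ‖a‖ < 1) (hz : ‖z‖ < 1) :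
    blaschkeFactor (-a) (blaschkeFactor a z) = z := by
  have h₁ := one_sub_conj_mul_ne_zero ha hz
  have h₂ := one_sub_conj_mul_ne_zero (a := -a) (by rwa [norm_neg])
    (norm_blaschkeFactor_lt_one ha hz)
  simp only [blaschkeFactor, map_neg, neg_mul, sub_neg_eq_add] at h₂ ⊢
  rw [div_eq_iff h₂, div_eq_mul_inv]
  linear_combination (z - a) * mul_inv_cancel₀ h₁

lemma HolSelfDisk.norm_lt_one {g : ℂ → ℂ} (hg : HolSelfDisk g) {z : ℂ}
    (hz : z ∈ ball (0 : ℂ) 1) : ‖g z‖ < 1 :=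
  mem_ball_zero_iff.1 (hg.2 hz)

lemma HolSelfDisk.comp {p q : ℂ → ℂ} (hp : HolSelfDisk p) (hq : HolSelfDisk q) :
    HolSelfDisk (fun z => p (q z)) :=
  ⟨hp.1.comp hq.1 hq.2, hp.2.comp hq.2⟩

lemma HolSelfDisk.iterate {f : ℂ → ℂ} (hf : HolSelfDisk f) (n : ℕ) : HolSelfDisk f^[n] := by
  induction n with
  | zero => exact ⟨differentiableOn_id, mapsTo_id _⟩
  | succ n ih =>
    rw [Function.iterate_succ']
    exact hf.comp ih

lemma holSelfDisk_blaschkeFactor {a : ℂ} (ha : ‖a‖ < 1) : HolSelfDisk (blaschkeFactor a) := by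
  refine ⟨DifferentiableOn.div (by fun_prop) (by fun_prop) fun z hz => ?_, fun z hz => ?_⟩
  · exact one_sub_conj_mul_ne_zero ha (mem_ball_zero_iff.1 hz)
  · exact mem_ball_zero_iff.2 (norm_blaschkeFactor_lt_one ha (mem_ball_zero_iff.1 hz))

lemma isDiskAutPair_blaschkeFactor {a : ℂ} (ha : ‖a‖ < 1) :
    IsDiskAutPair (blaschkeFactor a) (blaschkeFactor (-a)) := by
  have ha' : ‖-a‖ < 1 := by rwa [norm_neg]
  refine ⟨holSelfDisk_blaschkeFactor ha, holSelfDisk_blaschkeFactor ha', fun z hz => ?_,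
    fun z hz => ?_⟩
  · exact blaschkeFactor_neg_blaschkeFactor ha (mem_ball_zero_iff.1 hz)
  · simpa using blaschkeFactor_neg_blaschkeFactor ha' (mem_ball_zero_iff.1 hz)

lemma isDiskAutPair_const_mul {η : ℂ} (hη : ‖η‖ = 1) :
    IsDiskAutPair (fun z => η * z) (fun z => η⁻¹ * z) := by
  have hη₀ : η ≠ 0 := norm_ne_zero_iff.1 (by rw [hη]; exact one_ne_zero)
  refine ⟨⟨by fun_prop, fun z hz => ?_⟩, ⟨by fun_prop, fun z hz => ?_⟩,
    fun z _ => by field_simp, fun z _ => by field_simp⟩ <;>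
  simpa [mem_ball_zero_iff, hη] using hz

lemma IsDiskAutPair.comp {p pinv q qinv : ℂ → ℂ} (hp : IsDiskAutPair p pinv)
    (hq : IsDiskAutPair q qinv) :
    IsDiskAutPair (fun z => p (q z)) (fun z => qinv (pinv z)) := by
  refine ⟨hp.1.comp hq.1, hq.2.1.comp hp.2.1, fun z hz => ?_, fun z hz => ?_⟩
  · exact (congrArg qinv (hp.2.2.1 _ (hq.1.2 hz))).trans (hq.2.2.1 _ hz)
  · exact (congrArg p (hq.2.2.2 _ (hp.2.1.2 hz))).trans (hp.2.2.2 _ hz)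

lemma IsDiskAutPair.symm {p pinv : ℂ → ℂ} (hp : IsDiskAutPair p pinv) : IsDiskAutPair pinv p :=
  ⟨hp.2.1, hp.1, hp.2.2.2, hp.2.2.1⟩

/-- Schwarz–Pick lemma. -/
lemma HolSelfDisk.norm_blaschkeFactor_le {f : ℂ → ℂ} (hf : HolSelfDisk f) {z w : ℂ}
    (hz : ‖z‖ < 1) (hw : ‖w‖ < 1) :
    ‖blaschkeFactor (f w) (f z)‖ ≤ ‖blaschkeFactor w z‖ := by
  have hfw : ‖f w‖ < 1 := hf.norm_lt_one (mem_ball_zero_iff.2 hw)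
  have hg := (holSelfDisk_blaschkeFactor hfw).comp
    (hf.comp (holSelfDisk_blaschkeFactor (a := -w) (by rwa [norm_neg])))
  have hg₀ : blaschkeFactor (f w) (f (blaschkeFactor (-w) 0)) = 0 := by
    simp [blaschkeFactor]
  have := Complex.norm_le_norm_of_mapsTo_ball hg.1 (hg.2.mono_right ball_subset_closedBall) hg₀
    (norm_blaschkeFactor_lt_one hw hz)
  rwa [blaschkeFactor_neg_blaschkeFactor hw hz] at this

lemma IsDiskAutPair.norm_blaschkeFactor_eq {p pinv : ℂ → ℂ} (hp : IsDiskAutPair p pinv)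
    {z w : ℂ} (hz : ‖z‖ < 1) (hw : ‖w‖ < 1) :
    ‖blaschkeFactor (p w) (p z)‖ = ‖blaschkeFactor w z‖ := by
  refine le_antisymm (hp.1.norm_blaschkeFactor_le hz hw) ?_
  have := hp.2.1.norm_blaschkeFactor_le (hp.1.norm_lt_one (mem_ball_zero_iff.2 hz))
    (hp.1.norm_lt_one (mem_ball_zero_iff.2 hw))
  rwa [hp.2.2.1 _ (mem_ball_zero_iff.2 hz), hp.2.2.1 _ (mem_ball_zero_iff.2 hw)] at this

lemma Filter.Tendsto.blaschkeFactor {α : Type*} {l : Filter α} {u v : α → ℂ} {a b : ℂ}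
    (hu : Tendsto u l (𝓝 a)) (hv : Tendsto v l (𝓝 b)) (hab : 1 - conj a * b ≠ 0) :
    Tendsto (fun x => _root_.blaschkeFactor (u x) (v x)) l (𝓝 (_root_.blaschkeFactor a b)) :=
  (hv.sub hu).div (tendsto_const_nhds.sub (((continuous_conj.tendsto a).comp hu).mul hv)) hab

lemma tendsto_norm_blaschkeFactor_of_tendsto_inv {ι : Type*} {l : Filter ι}
    {γ γinv : ι → ℂ → ℂ} (hγ : ∀ i, IsDiskAutPair (γ i) (γinv i))
    {u v : ι → ℂ} (hu : ∀ i, ‖u i‖ < 1) (hv : ∀ i, ‖v i‖ < 1) {a b : ℂ} (ha : ‖a‖ < 1)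
    (hb : ‖b‖ < 1) (hua : Tendsto (fun i => γinv i (u i)) l (𝓝 a))
    (hvb : Tendsto (fun i => γinv i (v i)) l (𝓝 b)) :
    Tendsto (fun i => ‖blaschkeFactor (u i) (v i)‖) l (𝓝 ‖blaschkeFactor a b‖) := by
  refine ((hua.blaschkeFactor hvb (one_sub_conj_mul_ne_zero ha hb)).norm).congr fun i => ?_
  exact (hγ i).symm.norm_blaschkeFactor_eq (hv i) (hu i)

lemma exists_norm_eq_one_eqOn_mul_of_norm_eq {U : Set ℂ} (hU : IsOpen U)
    (hU' : IsPreconnected U) {H K : ℂ → ℂ} (hH : DifferentiableOn ℂ H U)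
    (hK : DifferentiableOn ℂ K U) (hnorm : ∀ z ∈ U, ‖H z‖ = ‖K z‖) :
    ∃ η : ℂ, ‖η‖ = 1 ∧ EqOn H (fun z => η * K z) U := by
  by_cases hK₀ : ∀ z ∈ U, K z = 0
  · refine ⟨1, norm_one, fun z hz => ?_⟩
    have := hnorm z hz
    rw [hK₀ z hz, norm_zero, norm_eq_zero] at this
    simp [this, hK₀ z hz]
  push Not at hK₀
  obtain ⟨z₀, hz₀, hKz₀⟩ := hK₀
  have hnear : ∀ᶠ z in 𝓝 z₀, z ∈ U ∧ K z ≠ 0 :=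
    (hU.eventually_mem hz₀).and
      ((hK.continuousOn.continuousAt (hU.mem_nhds hz₀)).eventually_ne hKz₀)
  set q : ℂ → ℂ := fun z => H z / K z
  have hq_norm : ∀ᶠ z in 𝓝 z₀, ‖q z‖ = 1 := hnear.mono fun z ⟨hz, hKz⟩ => by
    simp [q, hnorm z hz, hKz]
  have hq_const : ∀ᶠ z in 𝓝 z₀, q z = q z₀ := by
    refine Complex.eventually_eq_of_isLocalMax_norm (hnear.mono fun z ⟨hz, hKz⟩ => ?_)
      (hq_norm.mono fun z hz => by simp [hz, hq_norm.self_of_nhds])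
    exact (hH.differentiableAt (hU.mem_nhds hz)).div (hK.differentiableAt (hU.mem_nhds hz)) hKz
  refine ⟨q z₀, hq_norm.self_of_nhds, (hH.analyticOnNhd hU).eqOn_of_preconnected_of_eventuallyEq
    (analyticOnNhd_const.mul (hK.analyticOnNhd hU)) hU' hz₀ ?_⟩
  filter_upwards [hnear, hq_const] with z ⟨_, hKz⟩ hqz
  rw [← hqz]
  exact (div_mul_cancel₀ _ hKz).symm

lemma exists_isDiskAutPair_eq_comp_of_norm_blaschkeFactor_eq {h k : ℂ → ℂ}
    (hh : HolSelfDisk h) (hk : HolSelfDisk k)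
    (hnorm : ∀ z ∈ ball (0 : ℂ) 1,
      ‖blaschkeFactor (h 0) (h z)‖ = ‖blaschkeFactor (k 0) (k z)‖) :
    ∃ φ φinv : ℂ → ℂ, IsDiskAutPair φ φinv ∧ ∀ z ∈ ball (0 : ℂ) 1, h z = φ (k z) := by
  have h₀ : ‖h 0‖ < 1 := hh.norm_lt_one (mem_ball_self one_pos)
  have k₀ : ‖k 0‖ < 1 := hk.norm_lt_one (mem_ball_self one_pos)
  obtain ⟨η, hη, hηeq⟩ := exists_norm_eq_one_eqOn_mul_of_norm_eq isOpen_ball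
    (convex_ball 0 1).isPreconnected ((holSelfDisk_blaschkeFactor h₀).comp hh).1
    ((holSelfDisk_blaschkeFactor k₀).comp hk).1 hnorm
  refine ⟨_, _, (isDiskAutPair_blaschkeFactor h₀).symm.comp
    ((isDiskAutPair_const_mul hη).comp (isDiskAutPair_blaschkeFactor k₀)), fun z hz => ?_⟩
  simp only [← hηeq hz, blaschkeFactor_neg_blaschkeFactor h₀ (hh.norm_lt_one hz)]

theorem stmt4 (f : ℂ → ℂ) (hf : HolSelfDisk f)
    (γ γinv δ δinv : ℕ → ℂ → ℂ) (h k : ℂ → ℂ)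
    (hγ : ∀ n, IsDiskAutPair (γ n) (γinv n))
    (hδ : ∀ n, IsDiskAutPair (δ n) (δinv n))
    (hh : HolSelfDisk h) (hk : HolSelfDisk k)
    (hconvh : TendstoLocallyUniformlyOn (fun n z => γinv n (f^[n] z)) h atTop (ball (0:ℂ) 1))
    (hconvk : TendstoLocallyUniformlyOn (fun n z => δinv n (f^[n] z)) k atTop (ball (0:ℂ) 1)) :
    ∃ φ φinv : ℂ → ℂ, IsDiskAutPair φ φinv ∧ ∀ z ∈ ball (0:ℂ) 1, h z = φ (k z) := by
  refine exists_isDiskAutPair_eq_comp_of_norm_blaschkeFactor_eq hh hk fun z hz => ?_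
  have h0 : (0 : ℂ) ∈ ball (0 : ℂ) 1 := mem_ball_self one_pos
  have hfn : ∀ {w}, w ∈ ball (0 : ℂ) 1 → ∀ n, ‖f^[n] w‖ < 1 :=
    fun hw n => (hf.iterate n).norm_lt_one hw
  exact tendsto_nhds_unique
    (tendsto_norm_blaschkeFactor_of_tendsto_inv hγ (hfn h0) (hfn hz) (hh.norm_lt_one h0)
      (hh.norm_lt_one hz) (hconvh.tendsto_at h0) (hconvh.tendsto_at hz))
    (tendsto_norm_blaschkeFactor_of_tendsto_inv hδ (hfn h0) (hfn hz) (hk.norm_lt_one h0)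
      (hk.norm_lt_one hz) (hconvk.tendsto_at h0) (hconvk.tendsto_at hz))
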